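/- (Operator norm bound for 𝒯_K.) Suppose μ := σ_min(Σ₀) > 0 and K is a stabilizing gain. Then for every symmetric matrix X ∈ ℝ^{d×d}, ‖𝒯_K(X)‖ ≤ (C(K)/(μ σ_min(Q))) · ‖X‖; that is, the induced norm satisfies ‖𝒯_K‖ ≤ C(K)/(μ σ_min(Q)). -/

import Mathlib

open Matrix

noncomputable section

/-- Spectral radius of a real square matrix: the supremum of the absolute values of its
complex eigenvalues. -/
def specRad {d : ℕ} (M : Matrix (Fin d) (Fin d) ℝ) : ℝ :=
  ⨆ μ : spectrum ℂ (M.map (algebraMap ℝ ℂ)), ‖(μ : ℂ)‖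

/-- Minimum singular value of a real matrix. -/
def sigmaMin {m n : ℕ} (M : Matrix (Fin m) (Fin n) ℝ) : ℝ :=
  Real.sqrt (⨅ i, (show (Mᵀ * M).IsHermitian from Matrix.isHermitian_conjTranspose_mul_self M).eigenvalues i)

/-- Spectral norm (maximum singular value) of a real matrix. -/
def specNorm {m n : ℕ} (M : Matrix (Fin m) (Fin n) ℝ) : ℝ :=
  Real.sqrt (⨆ i, (show (Mᵀ * M).IsHermitian from Matrix.isHermitian_conjTranspose_mul_self M).eigenvalues i)

/-- Frobenius norm of a real matrix. -/
def frobNorm {m n : ℕ} (M : Matrix (Fin m) (Fin n) ℝ) : ℝ :=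
  Real.sqrt (∑ i, ∑ j, (M i j) ^ 2)

/-- For a stabilizing gain `K`, the unique positive semidefinite solution `P_K` of
`P = Q + Kᵀ R K + (A - B K)ᵀ P (A - B K)`, given by its convergent series representation. -/
def Pmat {d k : ℕ} (A : Matrix (Fin d) (Fin d) ℝ) (B : Matrix (Fin d) (Fin k) ℝ)
    (Q : Matrix (Fin d) (Fin d) ℝ) (R : Matrix (Fin k) (Fin k) ℝ)
    (K : Matrix (Fin k) (Fin d) ℝ) : Matrix (Fin d) (Fin d) ℝ :=
  ∑' t : ℕ, ((A - B * K)ᵀ) ^ t * (Q + Kᵀ * R * K) * (A - B * K) ^ t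

/-- The state correlation matrix `Σ_K = ∑_{t} (A-BK)^t Σ₀ ((A-BK)ᵀ)^t`. -/
def SigmaMat {d k : ℕ} (A : Matrix (Fin d) (Fin d) ℝ) (B : Matrix (Fin d) (Fin k) ℝ)
    (Sig0 : Matrix (Fin d) (Fin d) ℝ) (K : Matrix (Fin k) (Fin d) ℝ) :
    Matrix (Fin d) (Fin d) ℝ :=
  ∑' t : ℕ, (A - B * K) ^ t * Sig0 * ((A - B * K)ᵀ) ^ t

/-- The LQR cost `C(K) = Tr(Σ₀ P_K)`. -/
def Cost {d k : ℕ} (A : Matrix (Fin d) (Fin d) ℝ) (B : Matrix (Fin d) (Fin k) ℝ)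
    (Q : Matrix (Fin d) (Fin d) ℝ) (R : Matrix (Fin k) (Fin k) ℝ)
    (Sig0 : Matrix (Fin d) (Fin d) ℝ) (K : Matrix (Fin k) (Fin d) ℝ) : ℝ :=
  (Sig0 * Pmat A B Q R K).trace

/-- `E_K = (R + Bᵀ P_K B) K - Bᵀ P_K A`. -/
def Emat {d k : ℕ} (A : Matrix (Fin d) (Fin d) ℝ) (B : Matrix (Fin d) (Fin k) ℝ)
    (Q : Matrix (Fin d) (Fin d) ℝ) (R : Matrix (Fin k) (Fin k) ℝ)
    (K : Matrix (Fin k) (Fin d) ℝ) : Matrix (Fin k) (Fin d) ℝ :=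
  (R + Bᵀ * Pmat A B Q R K * B) * K - Bᵀ * Pmat A B Q R K * A

/-- The operator `𝒯_K(X) = ∑_t (A-BK)^t X ((A-BK)ᵀ)^t` on (symmetric) matrices. -/
def TK {d k : ℕ} (A : Matrix (Fin d) (Fin d) ℝ) (B : Matrix (Fin d) (Fin k) ℝ)
    (K : Matrix (Fin k) (Fin d) ℝ) (X : Matrix (Fin d) (Fin d) ℝ) :
    Matrix (Fin d) (Fin d) ℝ :=
  ∑' t : ℕ, (A - B * K) ^ t * X * ((A - B * K)ᵀ) ^ t

/-- The operator `ℱ_K(X) = (A-BK) X (A-BK)ᵀ` on (symmetric) matrices. -/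
def FK {d k : ℕ} (A : Matrix (Fin d) (Fin d) ℝ) (B : Matrix (Fin d) (Fin k) ℝ)
    (K : Matrix (Fin k) (Fin d) ℝ) (X : Matrix (Fin d) (Fin d) ℝ) :
    Matrix (Fin d) (Fin d) ℝ :=
  (A - B * K) * X * (A - B * K)ᵀ

/-- The norm of a linear operator on symmetric matrices induced by the spectral norm. -/
def opNormSym {d : ℕ} (L : Matrix (Fin d) (Fin d) ℝ → Matrix (Fin d) (Fin d) ℝ) : ℝ :=
  sSup {r : ℝ | ∃ X : Matrix (Fin d) (Fin d) ℝ,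
    Xᵀ = X ∧ X ≠ 0 ∧ r = specNorm (L X) / specNorm X}

namespace LQRAux
open Matrix Filter
open scoped ENNReal NNReal

variable {d m n : ℕ}

/-- Euclidean norm of a vector, via dot product. -/
def vnorm {n : ℕ} (x : Fin n → ℝ) : ℝ := Real.sqrt (x ⬝ᵥ x)

lemma dot_self_nonneg (x : Fin n → ℝ) : 0 ≤ x ⬝ᵥ x :=
  Finset.sum_nonneg fun i _ => mul_self_nonneg _

lemma vnorm_nonneg (x : Fin n → ℝ) : 0 ≤ vnorm x := Real.sqrt_nonneg _

lemma vnorm_sq (x : Fin n → ℝ) : vnorm x ^ 2 = x ⬝ᵥ x := Real.sq_sqrt (dot_self_nonneg x)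

lemma dot_le_vnorm_mul_vnorm (x y : Fin n → ℝ) : x ⬝ᵥ y ≤ vnorm x * vnorm y := by
  have h := Finset.sum_mul_sq_le_sq_mul_sq Finset.univ x y
  have h2 : (x ⬝ᵥ y) ^ 2 ≤ (vnorm x * vnorm y) ^ 2 := by
    rw [mul_pow, vnorm_sq, vnorm_sq]
    simpa [dotProduct, pow_two] using h
  calc x ⬝ᵥ y ≤ |x ⬝ᵥ y| := le_abs_self _
    _ = Real.sqrt ((x ⬝ᵥ y) ^ 2) := (Real.sqrt_sq_eq_abs _).symm
    _ ≤ Real.sqrt ((vnorm x * vnorm y) ^ 2) := Real.sqrt_le_sqrt h2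
    _ = vnorm x * vnorm y := by
        rw [Real.sqrt_sq (mul_nonneg (vnorm_nonneg x) (vnorm_nonneg y))]

lemma ctr (M : Matrix (Fin m) (Fin n) ℝ) : Mᴴ = Mᵀ := by
  ext i j; simp [conjTranspose_apply]

lemma psd_quad {M : Matrix (Fin n) (Fin n) ℝ} (hM : M.PosSemidef) (x : Fin n → ℝ) :
    0 ≤ x ⬝ᵥ M *ᵥ x := by simpa using hM.dotProduct_mulVec_nonneg x


/-- spectral sandwich: if all eigenvalues are at most `c`, then `c•1 - H` is PSD. -/
lemma smul_one_sub_psd {H : Matrix (Fin d) (Fin d) ℝ} (hH : H.IsHermitian) {c : ℝ}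
    (hc : ∀ i, hH.eigenvalues i ≤ c) :
    (c • (1 : Matrix (Fin d) (Fin d) ℝ) - H).PosSemidef := by
  classical
  set U : Matrix (Fin d) (Fin d) ℝ := (hH.eigenvectorUnitary : Matrix (Fin d) (Fin d) ℝ) with hU
  have hUU : U * star U = 1 := (Matrix.mem_unitaryGroup_iff).mp hH.eigenvectorUnitary.2
  have hdiag : H = U * diagonal hH.eigenvalues * star U := by
    have := hH.spectral_theorem
    simpa [Function.comp] using this
  have h1 : c • (1 : Matrix (Fin d) (Fin d) ℝ) = U * (c • 1) * star U := by
    rw [Matrix.mul_smul, Matrix.smul_mul, mul_one, hUU]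
  have key : c • (1 : Matrix (Fin d) (Fin d) ℝ) - H
      = U * diagonal (fun i => c - hH.eigenvalues i) * star U := by
    conv_lhs => rw [hdiag, h1]
    rw [← Matrix.sub_mul, ← Matrix.mul_sub]
    congr 2
    rw [← diagonal_one, ← diagonal_smul, diagonal_sub]
    congr 1
    funext i
    simp
  rw [key]
  exact (PosSemidef.diagonal (by rw [Pi.le_def]; intro i; simpa using hc i)).mul_mul_conjTranspose_same U

lemma sub_smul_one_psd {H : Matrix (Fin d) (Fin d) ℝ} (hH : H.IsHermitian) {c : ℝ}
    (hc : ∀ i, c ≤ hH.eigenvalues i) :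
    (H - c • (1 : Matrix (Fin d) (Fin d) ℝ)).PosSemidef := by
  classical
  set U : Matrix (Fin d) (Fin d) ℝ := (hH.eigenvectorUnitary : Matrix (Fin d) (Fin d) ℝ) with hU
  have hUU : U * star U = 1 := (Matrix.mem_unitaryGroup_iff).mp hH.eigenvectorUnitary.2
  have hdiag : H = U * diagonal hH.eigenvalues * star U := by
    have := hH.spectral_theorem
    simpa [Function.comp] using this
  have h1 : c • (1 : Matrix (Fin d) (Fin d) ℝ) = U * (c • 1) * star U := by
    rw [Matrix.mul_smul, Matrix.smul_mul, mul_one, hUU]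
  have key : H - c • (1 : Matrix (Fin d) (Fin d) ℝ)
      = U * diagonal (fun i => hH.eigenvalues i - c) * star U := by
    conv_lhs => rw [hdiag, h1]
    rw [← Matrix.sub_mul, ← Matrix.mul_sub]
    congr 2
    rw [← diagonal_one, ← diagonal_smul, diagonal_sub]
    congr 1
    funext i
    simp
  rw [key]
  exact (PosSemidef.diagonal (by rw [Pi.le_def]; intro i; simpa using hc i)).mul_mul_conjTranspose_same U

/-- the eigenvector of a hermitian matrix: eigen-equation and unit norm. -/
lemma eigenvector_facts {H : Matrix (Fin d) (Fin d) ℝ} (hH : H.IsHermitian) (i : Fin d) :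
    ∃ v : Fin d → ℝ, v ⬝ᵥ v = 1 ∧ H *ᵥ v = hH.eigenvalues i • v := by
  classical
  refine ⟨⇑(hH.eigenvectorBasis i), ?_, hH.mulVec_eigenvectorBasis i⟩
  have h1 : ‖hH.eigenvectorBasis i‖ = 1 := hH.eigenvectorBasis.orthonormal.1 i
  have h2 : ‖hH.eigenvectorBasis i‖ ^ 2 = (⇑(hH.eigenvectorBasis i) : Fin d → ℝ) ⬝ᵥ ⇑(hH.eigenvectorBasis i) := by
    rw [EuclideanSpace.norm_eq]
    rw [Real.sq_sqrt (Finset.sum_nonneg fun j _ => sq_nonneg _)]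
    simp [dotProduct, pow_two]
  rw [← h2, h1, one_pow]

/-! ### spectral norm lemmas -/

def eigS {m n : ℕ} (M : Matrix (Fin m) (Fin n) ℝ) : Fin n → ℝ :=
  (show (Mᵀ * M).IsHermitian from Matrix.isHermitian_conjTranspose_mul_self M).eigenvalues

def specNorm' {m n : ℕ} (M : Matrix (Fin m) (Fin n) ℝ) : ℝ :=
  Real.sqrt (⨆ i, eigS M i)

lemma psd_tmul (M : Matrix (Fin m) (Fin n) ℝ) : (Mᵀ * M).PosSemidef := by
  rw [← ctr]; exact posSemidef_conjTranspose_mul_self M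

lemma eigS_nonneg (M : Matrix (Fin m) (Fin n) ℝ) (i : Fin n) : 0 ≤ eigS M i :=
  (psd_tmul M).eigenvalues_nonneg i

lemma sup_eigS_nonneg [Nonempty (Fin n)] (M : Matrix (Fin m) (Fin n) ℝ) :
    0 ≤ ⨆ i, eigS M i := by
  obtain ⟨i⟩ := (inferInstance : Nonempty (Fin n))
  exact (eigS_nonneg M i).trans (le_ciSup (Set.Finite.bddAbove (Set.finite_range _)) i)

lemma specNorm'_nonneg (M : Matrix (Fin m) (Fin n) ℝ) : 0 ≤ specNorm' M := Real.sqrt_nonneg _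

lemma specNorm'_sq [Nonempty (Fin n)] (M : Matrix (Fin m) (Fin n) ℝ) :
    specNorm' M ^ 2 = ⨆ i, eigS M i := Real.sq_sqrt (sup_eigS_nonneg M)

lemma spec_quad [Nonempty (Fin n)] (M : Matrix (Fin m) (Fin n) ℝ) (x : Fin n → ℝ) :
    (M *ᵥ x) ⬝ᵥ (M *ᵥ x) ≤ specNorm' M ^ 2 * (x ⬝ᵥ x) := by
  have hH := Matrix.isHermitian_conjTranspose_mul_self M
  have hpsd := smul_one_sub_psd hH (c := ⨆ i, eigS M i)
    (fun i => le_ciSup (Set.Finite.bddAbove (Set.finite_range _)) i)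
  have h := psd_quad hpsd x
  rw [ctr M] at h
  rw [Matrix.sub_mulVec, dotProduct_sub, sub_nonneg, smul_mulVec, one_mulVec,
    dotProduct_smul, smul_eq_mul] at h
  have hq : x ⬝ᵥ (Mᵀ * M) *ᵥ x = (M *ᵥ x) ⬝ᵥ (M *ᵥ x) := by
    rw [← Matrix.mulVec_mulVec, Matrix.dotProduct_mulVec x Mᵀ, Matrix.vecMul_transpose]
  rw [hq] at h
  rw [specNorm'_sq]
  exact h

lemma spec_vnorm [Nonempty (Fin n)] (M : Matrix (Fin m) (Fin n) ℝ) (x : Fin n → ℝ) :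
    vnorm (M *ᵥ x) ≤ specNorm' M * vnorm x := by
  have h := spec_quad M x
  have := Real.sqrt_le_sqrt h
  rw [Real.sqrt_mul (sq_nonneg _), Real.sqrt_sq (specNorm'_nonneg M)] at this
  exact this

lemma spec_attain [Nonempty (Fin n)] (M : Matrix (Fin m) (Fin n) ℝ) :
    ∃ v : Fin n → ℝ, v ⬝ᵥ v = 1 ∧ (M *ᵥ v) ⬝ᵥ (M *ᵥ v) = specNorm' M ^ 2 ∧
      (Mᵀ * M) *ᵥ v = (specNorm' M ^ 2) • v := by
  classical
  have hH := Matrix.isHermitian_conjTranspose_mul_self M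
  obtain ⟨i0, hi0⟩ := Finite.exists_max (fun i => eigS M i)
  have hsup : (⨆ i, eigS M i) = eigS M i0 :=
    le_antisymm (ciSup_le hi0) (le_ciSup (Set.Finite.bddAbove (Set.finite_range _)) i0)
  obtain ⟨v, hv1, hv2⟩ := eigenvector_facts hH i0
  have hv2' : (Mᵀ * M) *ᵥ v = hH.eigenvalues i0 • v := by rw [← ctr M]; exact hv2
  clear hv2
  refine ⟨v, hv1, ?_, ?_⟩
  · have hq : (M *ᵥ v) ⬝ᵥ (M *ᵥ v) = v ⬝ᵥ (Mᵀ * M) *ᵥ v := by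
      rw [← Matrix.mulVec_mulVec, Matrix.dotProduct_mulVec v Mᵀ, Matrix.vecMul_transpose]
    rw [hq, hv2', dotProduct_smul, smul_eq_mul, hv1, mul_one, specNorm'_sq, hsup]
    rfl
  · rw [hv2', specNorm'_sq, hsup]
    rfl

lemma spec_le [Nonempty (Fin n)] (M : Matrix (Fin m) (Fin n) ℝ) {c : ℝ} (hc : 0 ≤ c)
    (h : ∀ x, vnorm (M *ᵥ x) ≤ c * vnorm x) : specNorm' M ≤ c := by
  obtain ⟨v, hv1, hv2, -⟩ := spec_attain M
  have hvn : vnorm v = 1 := by rw [vnorm, hv1, Real.sqrt_one]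
  have h2 : specNorm' M ^ 2 ≤ c ^ 2 := by
    rw [← hv2, ← vnorm_sq]
    have := h v
    rw [hvn, mul_one] at this
    exact pow_le_pow_left₀ (vnorm_nonneg _) this 2
  calc specNorm' M = Real.sqrt (specNorm' M ^ 2) := (Real.sqrt_sq (specNorm'_nonneg M)).symm
    _ ≤ Real.sqrt (c ^ 2) := Real.sqrt_le_sqrt h2
    _ = c := Real.sqrt_sq hc

lemma vnorm_add (a b : Fin n → ℝ) : vnorm (a + b) ≤ vnorm a + vnorm b := by
  have hab : (a + b) ⬝ᵥ (a + b) ≤ (vnorm a + vnorm b) ^ 2 := by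
    have h1 : (a + b) ⬝ᵥ (a + b) = a ⬝ᵥ a + 2 * (a ⬝ᵥ b) + b ⬝ᵥ b := by
      simp [dotProduct_add, add_dotProduct, dotProduct_comm b a]; ring
    rw [h1, add_sq, ← vnorm_sq a, ← vnorm_sq b]
    nlinarith [dot_le_vnorm_mul_vnorm a b]
  calc vnorm (a + b) ≤ Real.sqrt ((vnorm a + vnorm b) ^ 2) := Real.sqrt_le_sqrt hab
    _ = vnorm a + vnorm b := Real.sqrt_sq (add_nonneg (vnorm_nonneg a) (vnorm_nonneg b))

lemma spec_add [Nonempty (Fin n)] (M N : Matrix (Fin m) (Fin n) ℝ) :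
    specNorm' (M + N) ≤ specNorm' M + specNorm' N := by
  refine spec_le _ (add_nonneg (specNorm'_nonneg M) (specNorm'_nonneg N)) fun x => ?_
  rw [Matrix.add_mulVec]
  calc vnorm (M *ᵥ x + N *ᵥ x) ≤ vnorm (M *ᵥ x) + vnorm (N *ᵥ x) := vnorm_add _ _
    _ ≤ specNorm' M * vnorm x + specNorm' N * vnorm x :=
        add_le_add (spec_vnorm M x) (spec_vnorm N x)
    _ = (specNorm' M + specNorm' N) * vnorm x := by ring

lemma spec_mul [Nonempty (Fin n)] (M N : Matrix (Fin n) (Fin n) ℝ) :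
    specNorm' (M * N) ≤ specNorm' M * specNorm' N := by
  refine spec_le _ (mul_nonneg (specNorm'_nonneg M) (specNorm'_nonneg N)) fun x => ?_
  rw [← Matrix.mulVec_mulVec]
  calc vnorm (M *ᵥ (N *ᵥ x)) ≤ specNorm' M * vnorm (N *ᵥ x) := spec_vnorm M _
    _ ≤ specNorm' M * (specNorm' N * vnorm x) :=
        mul_le_mul_of_nonneg_left (spec_vnorm N x) (specNorm'_nonneg M)
    _ = specNorm' M * specNorm' N * vnorm x := by ring

lemma spec_transpose_le [Nonempty (Fin n)] (M : Matrix (Fin n) (Fin n) ℝ) :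
    specNorm' Mᵀ ≤ specNorm' M := by
  refine spec_le _ (specNorm'_nonneg M) fun x => ?_
  set w := Mᵀ *ᵥ x with hw
  have key : w ⬝ᵥ w ≤ vnorm x * (specNorm' M * vnorm w) := by
    have h1 : w ⬝ᵥ w = x ⬝ᵥ (M *ᵥ w) := by
      rw [hw, Matrix.mulVec_transpose, ← Matrix.dotProduct_mulVec]
    rw [h1]
    calc x ⬝ᵥ (M *ᵥ w) ≤ vnorm x * vnorm (M *ᵥ w) := dot_le_vnorm_mul_vnorm _ _
      _ ≤ vnorm x * (specNorm' M * vnorm w) :=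
          mul_le_mul_of_nonneg_left (spec_vnorm M w) (vnorm_nonneg x)
  rcases eq_or_lt_of_le (vnorm_nonneg w) with h0 | h0
  · rw [← h0]
    exact mul_nonneg (specNorm'_nonneg M) (vnorm_nonneg x)
  · have h2 : vnorm w * vnorm w ≤ specNorm' M * vnorm x * vnorm w := by
      nlinarith [vnorm_sq w]
    exact le_of_mul_le_mul_right h2 h0

lemma spec_transpose [Nonempty (Fin n)] (M : Matrix (Fin n) (Fin n) ℝ) :
    specNorm' Mᵀ = specNorm' M := by
  refine le_antisymm (spec_transpose_le M) ?_
  have := spec_transpose_le Mᵀ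
  rwa [Matrix.transpose_transpose] at this

lemma spec_pos_of_ne_zero [Nonempty (Fin n)] {X : Matrix (Fin n) (Fin n) ℝ} (hX : X ≠ 0) :
    0 < specNorm' X := by
  rcases eq_or_lt_of_le (specNorm'_nonneg X) with h0 | h0
  · exfalso
    apply hX
    ext i j
    have h := spec_quad X (Pi.single j 1)
    rw [← h0] at h
    simp only [ne_eq, zero_pow, OfNat.ofNat_ne_zero, not_false_eq_true, zero_mul] at h
    have hz : X *ᵥ Pi.single j 1 = 0 :=
      dotProduct_self_eq_zero.mp (le_antisymm h (dot_self_nonneg _))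
    have := congrFun hz i
    simpa [Matrix.mulVec_single] using this
  · exact h0

/-! ### trace and eigenvalue bounds -/

lemma quad_le_of_eig_le {H : Matrix (Fin d) (Fin d) ℝ} (hH : H.IsHermitian) {c : ℝ}
    (hc : ∀ i, hH.eigenvalues i ≤ c) (x : Fin d → ℝ) :
    x ⬝ᵥ H *ᵥ x ≤ c * (x ⬝ᵥ x) := by
  have h := psd_quad (smul_one_sub_psd hH hc) x
  rw [Matrix.sub_mulVec, dotProduct_sub, sub_nonneg, smul_mulVec, one_mulVec,
    dotProduct_smul, smul_eq_mul] at h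
  exact h

lemma quad_ge_of_le_eig {H : Matrix (Fin d) (Fin d) ℝ} (hH : H.IsHermitian) {c : ℝ}
    (hc : ∀ i, c ≤ hH.eigenvalues i) (x : Fin d → ℝ) :
    c * (x ⬝ᵥ x) ≤ x ⬝ᵥ H *ᵥ x := by
  have h := psd_quad (sub_smul_one_psd hH hc) x
  rw [Matrix.sub_mulVec, dotProduct_sub, sub_nonneg, smul_mulVec, one_mulVec,
    dotProduct_smul, smul_eq_mul] at h
  exact h

lemma trace_eq_sum_eig {H : Matrix (Fin d) (Fin d) ℝ} (hH : H.IsHermitian) :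
    H.trace = ∑ i, hH.eigenvalues i := by
  classical
  set U : Matrix (Fin d) (Fin d) ℝ := (hH.eigenvectorUnitary : Matrix (Fin d) (Fin d) ℝ) with hU
  have hUU : star U * U = 1 := (Matrix.mem_unitaryGroup_iff').mp hH.eigenvectorUnitary.2
  have hdiag : H = U * diagonal hH.eigenvalues * star U := by
    have := hH.spectral_theorem
    simpa [Function.comp] using this
  conv_lhs => rw [hdiag]
  rw [Matrix.trace_mul_comm, ← mul_assoc, hUU, one_mul, Matrix.trace_diagonal]

lemma trace_nonneg_psd {Y : Matrix (Fin d) (Fin d) ℝ} (hY : Y.PosSemidef) : 0 ≤ Y.trace := by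
  rw [trace_eq_sum_eig hY.1]
  exact Finset.sum_nonneg fun i _ => hY.eigenvalues_nonneg i

lemma sup_eig_le_trace [Nonempty (Fin d)] {Y : Matrix (Fin d) (Fin d) ℝ} (hY : Y.PosSemidef) :
    (⨆ i, hY.1.eigenvalues i) ≤ Y.trace := by
  rw [trace_eq_sum_eig hY.1]
  refine ciSup_le fun i => ?_
  exact Finset.single_le_sum (fun j _ => hY.eigenvalues_nonneg j) (Finset.mem_univ i)

lemma sp_le_trace [Nonempty (Fin d)] {Y : Matrix (Fin d) (Fin d) ℝ} (hY : Y.PosSemidef) :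
    specNorm' Y ≤ Y.trace := by
  obtain ⟨v, hv1, hv2, hv3⟩ := spec_attain Y
  set σ := specNorm' Y with hσ
  have hσ0 : 0 ≤ σ := specNorm'_nonneg Y
  have hYt : Yᵀ = Y := by rw [← ctr]; exact hY.1
  have hv3' : Y *ᵥ (Y *ᵥ v) = (σ ^ 2) • v := by
    rw [Matrix.mulVec_mulVec, ← hYt]
    nth_rewrite 2 [hYt]
    exact hv3
  set u := Y *ᵥ v + σ • v with hu
  by_cases hu0 : u = 0
  · have hYv : Y *ᵥ v = -(σ • v) := by
      rw [← add_eq_zero_iff_eq_neg]; exact hu0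
    have h0 : 0 ≤ v ⬝ᵥ Y *ᵥ v := psd_quad hY v
    rw [hYv] at h0
    rw [dotProduct_neg, dotProduct_smul, smul_eq_mul, hv1, mul_one] at h0
    have : σ = 0 := le_antisymm (by linarith) hσ0
    rw [this] at hσ ⊢
    exact trace_nonneg_psd hY
  · have hYu : Y *ᵥ u = σ • u := by
      rw [hu, Matrix.mulVec_add, hv3', Matrix.mulVec_smul, smul_add, smul_smul, ← pow_two]
      rw [add_comm]
    have huu : 0 < u ⬝ᵥ u :=
      lt_of_le_of_ne (dot_self_nonneg u) (fun h => hu0 (dotProduct_self_eq_zero.mp h.symm))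
    have h1 : σ * (u ⬝ᵥ u) = u ⬝ᵥ Y *ᵥ u := by
      rw [hYu, dotProduct_smul, smul_eq_mul]
    have h2 : u ⬝ᵥ Y *ᵥ u ≤ (⨆ i, hY.1.eigenvalues i) * (u ⬝ᵥ u) :=
      quad_le_of_eig_le hY.1 (fun i => le_ciSup (Set.Finite.bddAbove (Set.finite_range _)) i) u
    have h3 : σ * (u ⬝ᵥ u) ≤ Y.trace * (u ⬝ᵥ u) := by
      rw [h1]
      exact h2.trans (mul_le_mul_of_nonneg_right (sup_eig_le_trace hY) (le_of_lt huu))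
    exact le_of_mul_le_mul_right h3 huu

/-! ### sigmaMin facts -/

def sigMin {m n : ℕ} (M : Matrix (Fin m) (Fin n) ℝ) : ℝ := Real.sqrt (⨅ i, eigS M i)

lemma sigMin_nonneg (M : Matrix (Fin m) (Fin n) ℝ) : 0 ≤ sigMin M := Real.sqrt_nonneg _

lemma quad_tmul (M : Matrix (Fin m) (Fin n) ℝ) (x : Fin n → ℝ) :
    x ⬝ᵥ (Mᴴ * M) *ᵥ x = (M *ᵥ x) ⬝ᵥ (M *ᵥ x) := by
  rw [ctr, ← Matrix.mulVec_mulVec, Matrix.dotProduct_mulVec x Mᵀ, Matrix.vecMul_transpose]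

lemma sigMin_le_eig {S : Matrix (Fin d) (Fin d) ℝ} (hS : S.PosSemidef) (i : Fin d) :
    sigMin S ≤ hS.1.eigenvalues i := by
  classical
  obtain ⟨v, hv1, hv2⟩ := eigenvector_facts hS.1 i
  set lam := hS.1.eigenvalues i with hlam
  have hSt : Sᵀ = S := by rw [← ctr]; exact hS.1
  have hv3 : (Sᴴ * S) *ᵥ v = (lam ^ 2) • v := by
    rw [ctr, hSt, ← Matrix.mulVec_mulVec, hv2, Matrix.mulVec_smul, hv2, smul_smul, ← pow_two]
  have hinf : (⨅ j, eigS S j) * (v ⬝ᵥ v) ≤ v ⬝ᵥ (Sᴴ * S) *ᵥ v :=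
    quad_ge_of_le_eig (Matrix.isHermitian_conjTranspose_mul_self S)
      (fun j => ciInf_le (Set.Finite.bddBelow (Set.finite_range _)) j) v
  rw [hv3, dotProduct_smul, smul_eq_mul, hv1, mul_one, mul_one] at hinf
  calc sigMin S ≤ Real.sqrt (lam ^ 2) := Real.sqrt_le_sqrt hinf
    _ = |lam| := Real.sqrt_sq_eq_abs lam
    _ = lam := abs_of_nonneg (hS.eigenvalues_nonneg i)

lemma psd_sub_sigMin_smul {S : Matrix (Fin d) (Fin d) ℝ} (hS : S.PosSemidef) :
    (S - sigMin S • (1 : Matrix (Fin d) (Fin d) ℝ)).PosSemidef :=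
  sub_smul_one_psd hS.1 (sigMin_le_eig hS)

lemma sigMin_pos_of_posDef [Nonempty (Fin d)] {Q : Matrix (Fin d) (Fin d) ℝ} (hQ : Q.PosDef) :
    0 < sigMin Q := by
  classical
  rw [sigMin, Real.sqrt_pos]
  obtain ⟨i1, hi1⟩ := Finite.exists_min (fun i => eigS Q i)
  have hinf : (⨅ i, eigS Q i) = eigS Q i1 :=
    le_antisymm (ciInf_le (Set.Finite.bddBelow (Set.finite_range _)) i1) (le_ciInf hi1)
  obtain ⟨v, hv1, hv2⟩ := eigenvector_facts (Matrix.isHermitian_conjTranspose_mul_self Q) i1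
  have heig : eigS Q i1 = (Q *ᵥ v) ⬝ᵥ (Q *ᵥ v) := by
    rw [← quad_tmul, hv2, dotProduct_smul, smul_eq_mul, hv1, mul_one]
    rfl
  have hvne : v ≠ 0 := fun h => by simp [h] at hv1
  have hQv : Q *ᵥ v ≠ 0 := by
    intro h
    have := hQ.dotProduct_mulVec_pos hvne
    rw [h] at this
    simp at this
  rw [hinf, heig]
  exact lt_of_le_of_ne (dot_self_nonneg _) (fun h => hQv (dotProduct_self_eq_zero.mp h.symm))

/-! ### trace of product of PSD matrices -/

open scoped MatrixOrder in
lemma trace_mul_psd_nonneg {A B : Matrix (Fin d) (Fin d) ℝ} (hA : A.PosSemidef)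
    (hB : B.PosSemidef) : 0 ≤ (A * B).trace := by
  classical
  have hs : CFC.sqrt A * CFC.sqrt A = A := CFC.sqrt_mul_sqrt_self A hA.nonneg
  have h1 : (A * B).trace = (CFC.sqrt A * B * CFC.sqrt A).trace := by
    conv_lhs => rw [← hs]
    rw [mul_assoc, Matrix.trace_mul_comm]
  rw [h1]
  have hsym : (CFC.sqrt A).IsHermitian := (CFC.sqrt_nonneg A).posSemidef.1
  have : (CFC.sqrt A * B * CFC.sqrt A).PosSemidef := by
    nth_rewrite 2 [← hsym]
    exact hB.mul_mul_conjTranspose_same (CFC.sqrt A)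
  exact trace_nonneg_psd this

lemma trace_mul_mono_psd {A B C : Matrix (Fin d) (Fin d) ℝ} (hA : A.PosSemidef)
    (hBC : (B - C).PosSemidef) : (A * C).trace ≤ (A * B).trace := by
  have h := trace_mul_psd_nonneg hA hBC
  rw [Matrix.mul_sub, Matrix.trace_sub, sub_nonneg] at h
  exact h

/-- specNorm' squared bounded by trace of MᵀM (Frobenius bound). -/
lemma spec_sq_le_trace_tmul [Nonempty (Fin d)] (M : Matrix (Fin d) (Fin d) ℝ) :
    specNorm' M ^ 2 ≤ (Mᵀ * M).trace := by
  rw [specNorm'_sq]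
  have : (Mᵀ * M).trace = ∑ i, eigS M i := by
    have h := trace_eq_sum_eig (psd_tmul M).1
    exact h
  rw [this]
  exact ciSup_le fun i =>
    Finset.single_le_sum (fun j _ => eigS_nonneg M j) (Finset.mem_univ i)

/-! ### continuity of specNorm' and tsum bound -/

lemma spec_zero : specNorm' (0 : Matrix (Fin d) (Fin d) ℝ) = 0 := by
  rcases isEmpty_or_nonempty (Fin d) with h | h
  · rw [specNorm', eigS]
    rw [iSup_of_empty', Real.sSup_empty]
    exact Real.sqrt_zero
  · refine le_antisymm (spec_le _ le_rfl fun x => ?_) (specNorm'_nonneg _)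
    rw [Matrix.zero_mulVec, zero_mul]
    exact le_of_eq (by rw [vnorm]; simp)

lemma spec_sub_abs_le [Nonempty (Fin d)] (M N : Matrix (Fin d) (Fin d) ℝ) :
    |specNorm' M - specNorm' N| ≤ specNorm' (M - N) := by
  rw [abs_sub_le_iff]
  constructor
  · have h := spec_add (M - N) N
    rw [sub_add_cancel] at h
    linarith
  · have h := spec_add (N - M) M
    rw [sub_add_cancel] at h
    have h2 : specNorm' (N - M) = specNorm' (M - N) := by
      have hT := spec_transpose (M := (N - M))
      have : (N - M) = -(M - N) := by abel
      rw [this]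
      have hneg : ∀ P : Matrix (Fin d) (Fin d) ℝ, specNorm' (-P) = specNorm' P := by
        intro P
        refine le_antisymm (spec_le _ (specNorm'_nonneg P) fun x => ?_) ?_
        · rw [Matrix.neg_mulVec]
          have : vnorm (-(P *ᵥ x)) = vnorm (P *ᵥ x) := by
            rw [vnorm, vnorm]; simp
          rw [this]; exact spec_vnorm P x
        · refine spec_le _ (specNorm'_nonneg (-P)) fun x => ?_
          have : P *ᵥ x = -((-P) *ᵥ x) := by rw [Matrix.neg_mulVec]; simp
          rw [this]
          have h3 : vnorm (-((-P) *ᵥ x)) = vnorm ((-P) *ᵥ x) := by rw [vnorm, vnorm]; simp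
          rw [h3]; exact spec_vnorm (-P) x
      exact hneg _
    linarith

lemma trace_tmul_eq (M : Matrix (Fin m) (Fin n) ℝ) :
    (Mᵀ * M).trace = ∑ j, ∑ i, (M i j) ^ 2 := by
  rw [Matrix.trace]
  congr 1
  funext j
  rw [Matrix.diag_apply, Matrix.mul_apply]
  congr 1
  funext i
  rw [Matrix.transpose_apply, pow_two]

lemma spec_le_frob [Nonempty (Fin d)] (M : Matrix (Fin d) (Fin d) ℝ) :
    specNorm' M ≤ Real.sqrt ((Mᵀ * M).trace) := by
  have h := spec_sq_le_trace_tmul M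
  calc specNorm' M = Real.sqrt (specNorm' M ^ 2) := (Real.sqrt_sq (specNorm'_nonneg M)).symm
    _ ≤ Real.sqrt ((Mᵀ * M).trace) := Real.sqrt_le_sqrt h

lemma continuous_spec [Nonempty (Fin d)] :
    Continuous (fun M : Matrix (Fin d) (Fin d) ℝ => specNorm' M) := by
  rw [continuous_iff_continuousAt]
  intro M₀
  have hg : Continuous (fun M : Matrix (Fin d) (Fin d) ℝ =>
      Real.sqrt ((((M - M₀)ᵀ) * (M - M₀)).trace)) := by
    refine Real.continuous_sqrt.comp ?_
    exact (((continuous_id.sub continuous_const).matrix_transpose).matrix_mul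
      (continuous_id.sub continuous_const)).matrix_trace
  have hg0 : Tendsto (fun M : Matrix (Fin d) (Fin d) ℝ =>
      Real.sqrt ((((M - M₀)ᵀ) * (M - M₀)).trace)) (nhds M₀) (nhds 0) := by
    have := hg.tendsto M₀
    simpa using this
  have hsq : Tendsto (fun M => specNorm' M - specNorm' M₀) (nhds M₀) (nhds 0) := by
    refine squeeze_zero_norm (fun M => ?_) hg0
    calc ‖specNorm' M - specNorm' M₀‖ = |specNorm' M - specNorm' M₀| := rfl
      _ ≤ specNorm' (M - M₀) := spec_sub_abs_le M M₀
      _ ≤ Real.sqrt ((((M - M₀)ᵀ) * (M - M₀)).trace) := spec_le_frob _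
  have := hsq.add (tendsto_const_nhds (x := specNorm' M₀))
  simpa [ContinuousAt] using this

lemma spec_sum_le [Nonempty (Fin d)] (f : ℕ → Matrix (Fin d) (Fin d) ℝ) (F : Finset ℕ) :
    specNorm' (∑ t ∈ F, f t) ≤ ∑ t ∈ F, specNorm' (f t) := by
  classical
  induction F using Finset.cons_induction with
  | empty => simp [spec_zero]
  | cons a F ha ih =>
    rw [Finset.sum_cons, Finset.sum_cons]
    exact (spec_add _ _).trans (by linarith)

lemma spec_tsum_le [Nonempty (Fin d)] {f : ℕ → Matrix (Fin d) (Fin d) ℝ} (hf : Summable f)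
    {g : ℕ → ℝ} (hg : Summable g) (hb : ∀ t, specNorm' (f t) ≤ g t) :
    specNorm' (∑' t, f t) ≤ ∑' t, g t := by
  have hg0 : ∀ t, 0 ≤ g t := fun t => (specNorm'_nonneg (f t)).trans (hb t)
  have htend : Tendsto (fun F : Finset ℕ => specNorm' (∑ t ∈ F, f t)) atTop
      (nhds (specNorm' (∑' t, f t))) :=
    (continuous_spec.tendsto _).comp hf.hasSum
  refine le_of_tendsto htend (Filter.Eventually.of_forall fun F => ?_)
  calc specNorm' (∑ t ∈ F, f t) ≤ ∑ t ∈ F, specNorm' (f t) := spec_sum_le f F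
    _ ≤ ∑ t ∈ F, g t := Finset.sum_le_sum fun t _ => hb t
    _ ≤ ∑' t, g t := Summable.sum_le_tsum F (fun t _ => hg0 t) hg

/-! ### geometric decay of powers -/

def specRad' {d : ℕ} (M : Matrix (Fin d) (Fin d) ℝ) : ℝ :=
  ⨆ μ : spectrum ℂ (M.map (algebraMap ℝ ℂ)), ‖(μ : ℂ)‖

lemma pow_entry_bound {d : ℕ} (L : Matrix (Fin d) (Fin d) ℝ) (hK : specRad' L < 1) :
    ∃ (N : ℕ) (r : ℝ), 0 ≤ r ∧ r < 1 ∧ ∀ t, N ≤ t → ∀ i j, |(L ^ t) i j| ≤ r ^ t := by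
  classical
  letI : SeminormedRing (Matrix (Fin d) (Fin d) ℂ) := Matrix.linftyOpSemiNormedRing
  letI : NormedRing (Matrix (Fin d) (Fin d) ℂ) := Matrix.linftyOpNormedRing
  letI : NormedAlgebra ℂ (Matrix (Fin d) (Fin d) ℂ) := Matrix.linftyOpNormedAlgebra
  letI : CompleteSpace (Matrix (Fin d) (Fin d) ℂ) := FiniteDimensional.complete ℂ _
  set Lc : Matrix (Fin d) (Fin d) ℂ := L.map (algebraMap ℝ ℂ) with hLc
  -- spectral radius < 1
  have hσc : IsCompact (spectrum ℂ Lc) := spectrum.isCompact Lc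
  have hbdd : BddAbove (Set.range fun μ : spectrum ℂ Lc => ‖(μ : ℂ)‖) := by
    rw [← Set.image_eq_range]
    exact (hσc.image continuous_norm).bddAbove
  have hrad : spectralRadius ℂ Lc < 1 := by
    have h1 : spectralRadius ℂ Lc ≤ ENNReal.ofReal (specRad' L) := by
      rw [spectralRadius]
      refine iSup₂_le fun k hk => ?_
      rw [← enorm_eq_nnnorm, ← ofReal_norm]
      refine ENNReal.ofReal_le_ofReal ?_
      have := le_ciSup hbdd (⟨k, hk⟩ : spectrum ℂ Lc)
      exact this
    refine lt_of_le_of_lt h1 ?_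
    rw [← ENNReal.ofReal_one]
    exact (ENNReal.ofReal_lt_ofReal_iff one_pos).mpr hK
  have hρne : spectralRadius ℂ Lc ≠ ⊤ := (hrad.trans (by norm_num)).ne
  set r : ℝ := ((spectralRadius ℂ Lc).toReal + 1) / 2 with hr
  have htoReal : (spectralRadius ℂ Lc).toReal < 1 := by
    rw [← ENNReal.toReal_one]
    exact ENNReal.toReal_strict_mono (by norm_num) hrad
  have hr0 : 0 ≤ r := by
    have := ENNReal.toReal_nonneg (a := spectralRadius ℂ Lc)
    rw [hr]; linarith
  have hr1 : r < 1 := by rw [hr]; linarith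
  have hρr : spectralRadius ℂ Lc < ENNReal.ofReal r := by
    have h2 : (spectralRadius ℂ Lc).toReal < r := by
      rw [hr]; linarith
    calc spectralRadius ℂ Lc = ENNReal.ofReal (spectralRadius ℂ Lc).toReal :=
          (ENNReal.ofReal_toReal hρne).symm
      _ < ENNReal.ofReal r :=
          (ENNReal.ofReal_lt_ofReal_iff
            (lt_of_le_of_lt ENNReal.toReal_nonneg h2)).mpr h2
  have hG := spectrum.pow_nnnorm_pow_one_div_tendsto_nhds_spectralRadius Lc
  have hev : ∀ᶠ (n : ℕ) in atTop, ((‖Lc ^ n‖₊ : ℝ≥0∞) ^ (1 / (n : ℝ))) < ENNReal.ofReal r :=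
    hG.eventually_lt_const hρr
  obtain ⟨N, hN⟩ := (Filter.eventually_atTop).mp hev
  refine ⟨N + 1, r, hr0, hr1, fun t ht i j => ?_⟩
  have htpos : (1 : ℕ) ≤ t := le_trans (Nat.le_add_left 1 N) ht
  have hb : (‖Lc ^ t‖₊ : ℝ≥0∞) ≤ ENNReal.ofReal (r ^ t) := by
    have h1 : (‖Lc ^ t‖₊ : ℝ≥0∞) ^ (1 / (t : ℝ)) < ENNReal.ofReal r :=
      hN t (le_trans (Nat.le_succ N) ht)
    have h2 : ((‖Lc ^ t‖₊ : ℝ≥0∞) ^ (1 / (t : ℝ))) ^ (t : ℝ) ≤ (ENNReal.ofReal r) ^ (t : ℝ) :=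
      ENNReal.rpow_le_rpow h1.le (Nat.cast_nonneg t)
    have ht0 : (t : ℝ) ≠ 0 := by
      have : t ≠ 0 := by omega
      exact_mod_cast this
    have h3 : (((‖Lc ^ t‖₊ : ℝ≥0∞)) ^ (1 / (t : ℝ))) ^ (t : ℝ) = (‖Lc ^ t‖₊ : ℝ≥0∞) := by
      rw [← ENNReal.rpow_mul, one_div, inv_mul_cancel₀ ht0, ENNReal.rpow_one]
    have h4 : (ENNReal.ofReal r) ^ (t : ℝ) = ENNReal.ofReal (r ^ t) := by
      rw [ENNReal.ofReal_rpow_of_nonneg hr0 (Nat.cast_nonneg t), Real.rpow_natCast]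
    rw [h3, h4] at h2
    exact h2
  have hnorm : ‖Lc ^ t‖ ≤ r ^ t := by
    rw [← enorm_eq_nnnorm, ← ofReal_norm] at hb
    exact (ENNReal.ofReal_le_ofReal_iff (pow_nonneg hr0 t)).mp hb
  have hmap : Lc ^ t = (L ^ t).map (algebraMap ℝ ℂ) := by
    rw [hLc, ← RingHom.mapMatrix_apply, ← RingHom.mapMatrix_apply, map_pow]
  have hentry : ‖(Lc ^ t) i j‖ ≤ ‖Lc ^ t‖ := by
    rw [Matrix.linfty_opNorm_def]
    calc ‖(Lc ^ t) i j‖ ≤ ∑ j', ‖(Lc ^ t) i j'‖ :=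
          Finset.single_le_sum (f := fun j' => ‖(Lc ^ t) i j'‖)
            (fun _ _ => norm_nonneg _) (Finset.mem_univ j)
      _ = ((∑ j', ‖(Lc ^ t) i j'‖₊ : NNReal) : ℝ) := by push_cast; rfl
      _ ≤ _ := NNReal.coe_le_coe.mpr
            (Finset.le_sup (f := fun i => ∑ j', ‖(Lc ^ t) i j'‖₊) (Finset.mem_univ i))
  have : |(L ^ t) i j| = ‖(Lc ^ t) i j‖ := by
    rw [hmap, Matrix.map_apply]
    simp
  rw [this]
  exact hentry.trans hnorm

/-! ### summability helpers -/

lemma summable_of_entry_bound {d e : ℕ} (f : ℕ → Matrix (Fin d) (Fin e) ℝ) (c : ℕ → ℝ)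
    (hc : Summable c) (hc0 : ∀ t, 0 ≤ c t)
    (h : ∀ t i j, |f t i j| ≤ c t) : Summable f := by
  letI := Matrix.normedAddCommGroup (α := ℝ) (m := Fin d) (n := Fin e)
  letI := Matrix.normedSpace (R := ℝ) (α := ℝ) (m := Fin d) (n := Fin e)
  letI : CompleteSpace (Matrix (Fin d) (Fin e) ℝ) := FiniteDimensional.complete ℝ _
  refine Summable.of_norm_bounded hc ?_
  intro t
  rw [Matrix.norm_le_iff (hc0 t)]
  intro i j
  simpa using h t i j

lemma summable_matrix_of_tail_bound {d e : ℕ} (f : ℕ → Matrix (Fin d) (Fin e) ℝ)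
    (c : ℕ → ℝ) (hc : Summable c) (hc0 : ∀ t, 0 ≤ c t) (N : ℕ)
    (h : ∀ t, N ≤ t → ∀ i j, |f t i j| ≤ c t) : Summable f := by
  rw [← summable_nat_add_iff N]
  refine summable_of_entry_bound _ (fun t => c (t + N))
    ((summable_nat_add_iff N).mpr hc) (fun t => hc0 _) ?_
  intro t i j
  exact h (t + N) (Nat.le_add_left N t) i j

lemma summable_real_of_tail_bound (f c : ℕ → ℝ) (hf0 : ∀ t, 0 ≤ f t) (hc : Summable c)
    (N : ℕ) (h : ∀ t, N ≤ t → f t ≤ c t) : Summable f := by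
  rw [← summable_nat_add_iff N]
  exact Summable.of_nonneg_of_le (fun n => hf0 _) (fun n => h _ (Nat.le_add_left N n))
    ((summable_nat_add_iff N).mpr hc)

lemma summable_geo_sq {r : ℝ} (h0 : 0 ≤ r) (h1 : r < 1) :
    Summable (fun t : ℕ => r ^ t * r ^ t) := by
  have h2 : r * r < 1 := by nlinarith
  exact (summable_geometric_of_lt_one (mul_nonneg h0 h0) h2).congr fun t => mul_pow r r t

lemma entry_triple_bound {d : ℕ} (P X Q : Matrix (Fin d) (Fin d) ℝ) {p q : ℝ}
    (hp : 0 ≤ p) (hq : 0 ≤ q)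
    (hP : ∀ i a, |P i a| ≤ p) (hQ : ∀ a j, |Q a j| ≤ q) (i j : Fin d) :
    |(P * X * Q) i j| ≤ (∑ a, ∑ b, |X a b|) * (p * q) := by
  have hexp : (P * X * Q) i j = ∑ b, ∑ a, P i a * X a b * Q b j := by
    rw [Matrix.mul_apply]
    refine Finset.sum_congr rfl fun b _ => ?_
    rw [Matrix.mul_apply, Finset.sum_mul]
  rw [hexp]
  refine le_trans (Finset.abs_sum_le_sum_abs _ _) ?_
  refine le_trans (Finset.sum_le_sum fun b _ => Finset.abs_sum_le_sum_abs _ _) ?_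
  have hstep : ∀ b a, |P i a * X a b * Q b j| ≤ |X a b| * (p * q) := by
    intro b a
    rw [abs_mul, abs_mul]
    calc |P i a| * |X a b| * |Q b j| ≤ p * |X a b| * q :=
          mul_le_mul (mul_le_mul (hP i a) le_rfl (abs_nonneg _) hp) (hQ b j)
            (abs_nonneg _) (mul_nonneg hp (abs_nonneg _))
      _ = |X a b| * (p * q) := by ring
  calc ∑ b, ∑ a, |P i a * X a b * Q b j| ≤ ∑ b, ∑ a, |X a b| * (p * q) :=
        Finset.sum_le_sum fun b _ => Finset.sum_le_sum fun a _ => hstep b a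
    _ = (∑ a, ∑ b, |X a b|) * (p * q) := by
        rw [Finset.sum_comm, Finset.sum_mul]
        refine Finset.sum_congr rfl fun a _ => ?_
        rw [Finset.sum_mul]

/-! ### tsum commutation -/

def quadHom {d : ℕ} (x : Fin d → ℝ) : Matrix (Fin d) (Fin d) ℝ →+ ℝ where
  toFun M := x ⬝ᵥ M *ᵥ x
  map_zero' := by simp
  map_add' M N := by simp [Matrix.add_mulVec, dotProduct_add]

lemma quad_tsum {d : ℕ} (f : ℕ → Matrix (Fin d) (Fin d) ℝ) (hf : Summable f) (x : Fin d → ℝ) :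
    x ⬝ᵥ (∑' t, f t) *ᵥ x = ∑' t, x ⬝ᵥ (f t) *ᵥ x :=
  ((hf.hasSum.map (quadHom x)
    (continuous_const.dotProduct (continuous_id.matrix_mulVec continuous_const))).tsum_eq).symm

lemma trace_tsum {d : ℕ} (f : ℕ → Matrix (Fin d) (Fin d) ℝ) (hf : Summable f) :
    (∑' t, f t).trace = ∑' t, (f t).trace :=
  ((hf.hasSum.map (Matrix.traceAddMonoidHom (Fin d) ℝ) (continuous_id.matrix_trace)).tsum_eq).symm

lemma summable_trace {d : ℕ} (f : ℕ → Matrix (Fin d) (Fin d) ℝ) (hf : Summable f) :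
    Summable (fun t => (f t).trace) :=
  (hf.hasSum.map (Matrix.traceAddMonoidHom (Fin d) ℝ) (continuous_id.matrix_trace)).summable

lemma mulleft_tsum {d : ℕ} (S : Matrix (Fin d) (Fin d) ℝ) (f : ℕ → Matrix (Fin d) (Fin d) ℝ)
    (hf : Summable f) : S * (∑' t, f t) = ∑' t, S * f t :=
  ((hf.hasSum.map (AddMonoidHom.mulLeft S) (continuous_const.matrix_mul continuous_id)).tsum_eq).symm

lemma summable_mulleft {d : ℕ} (S : Matrix (Fin d) (Fin d) ℝ) (f : ℕ → Matrix (Fin d) (Fin d) ℝ)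
    (hf : Summable f) : Summable (fun t => S * f t) :=
  (hf.hasSum.map (AddMonoidHom.mulLeft S) (continuous_const.matrix_mul continuous_id)).summable

lemma tsum_psd {d : ℕ} (f : ℕ → Matrix (Fin d) (Fin d) ℝ) (hf : Summable f)
    (h : ∀ t, (f t).PosSemidef) : (∑' t, f t).PosSemidef := by
  refine PosSemidef.of_dotProduct_mulVec_nonneg ?_ ?_
  · show (∑' t, f t)ᴴ = _
    rw [Matrix.conjTranspose_tsum]
    exact tsum_congr fun t => (h t).1
  · intro x
    have hsx : star x = x := by simp
    rw [hsx, quad_tsum f hf x]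
    exact tsum_nonneg fun t => psd_quad (h t) x

end LQRAux

/-- Operator norm bound for `𝒯_K`. -/
theorem TK_norm_bound {d k : ℕ}
    (A : Matrix (Fin d) (Fin d) ℝ) (B : Matrix (Fin d) (Fin k) ℝ)
    (Q : Matrix (Fin d) (Fin d) ℝ) (R : Matrix (Fin k) (Fin k) ℝ)
    (Sig0 : Matrix (Fin d) (Fin d) ℝ)
    (hQ : Q.PosDef) (hR : R.PosDef) (hSig0 : Sig0.PosSemidef)
    (hmu : 0 < sigmaMin Sig0)
    (K : Matrix (Fin k) (Fin d) ℝ) (hK : specRad (A - B * K) < 1) :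
    (∀ X : Matrix (Fin d) (Fin d) ℝ, Xᵀ = X →
      specNorm (TK A B K X) ≤
        Cost A B Q R Sig0 K / (sigmaMin Sig0 * sigmaMin Q) * specNorm X) ∧
    opNormSym (TK A B K) ≤ Cost A B Q R Sig0 K / (sigmaMin Sig0 * sigmaMin Q) := by
  classical
  rcases Nat.eq_zero_or_pos d with hd0 | hdpos
  · exfalso
    subst hd0
    have hz : sigmaMin Sig0 = 0 := by
      rw [sigmaMin, iInf, Set.range_eq_empty, Real.sInf_empty, Real.sqrt_zero]
    rw [hz] at hmu
    exact lt_irrefl 0 hmu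
  haveI : Nonempty (Fin d) := ⟨⟨0, hdpos⟩⟩
  set L : Matrix (Fin d) (Fin d) ℝ := A - B * K with hL
  set W : Matrix (Fin d) (Fin d) ℝ := Q + Kᵀ * R * K with hW
  obtain ⟨N, r, hr0, hr1, hpow⟩ := LQRAux.pow_entry_bound L hK
  have hgeo2 := LQRAux.summable_geo_sq hr0 hr1
  have hb0 : ∀ t : ℕ, 0 ≤ r ^ t * r ^ t :=
    fun t => mul_nonneg (pow_nonneg hr0 t) (pow_nonneg hr0 t)
  have hTpow : ∀ t : ℕ, (Lᵀ) ^ t = (L ^ t)ᵀ := fun t => (Matrix.transpose_pow L t).symm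
  -- summability of the series defining TK
  have hsumX : ∀ X : Matrix (Fin d) (Fin d) ℝ, Summable (fun t => L ^ t * X * (Lᵀ) ^ t) := by
    intro X
    have hXs : 0 ≤ ∑ a, ∑ b, |X a b| :=
      Finset.sum_nonneg fun a _ => Finset.sum_nonneg fun b _ => abs_nonneg _
    refine LQRAux.summable_matrix_of_tail_bound _
      (fun t => (∑ a, ∑ b, |X a b|) * (r ^ t * r ^ t)) (hgeo2.mul_left _)
      (fun t => mul_nonneg hXs (hb0 t)) N ?_
    intro t ht i j
    rw [hTpow t]
    exact LQRAux.entry_triple_bound (L ^ t) X ((L ^ t)ᵀ) (pow_nonneg hr0 t) (pow_nonneg hr0 t)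
      (fun i a => hpow t ht i a)
      (fun a j => by rw [Matrix.transpose_apply]; exact hpow t ht j a) i j
  -- summability of the series defining Pmat
  have hsumP : Summable (fun t => (Lᵀ) ^ t * W * L ^ t) := by
    have hWs : 0 ≤ ∑ a, ∑ b, |W a b| :=
      Finset.sum_nonneg fun a _ => Finset.sum_nonneg fun b _ => abs_nonneg _
    refine LQRAux.summable_matrix_of_tail_bound _
      (fun t => (∑ a, ∑ b, |W a b|) * (r ^ t * r ^ t)) (hgeo2.mul_left _)
      (fun t => mul_nonneg hWs (hb0 t)) N ?_
    intro t ht i j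
    rw [hTpow t]
    exact LQRAux.entry_triple_bound ((L ^ t)ᵀ) W (L ^ t) (pow_nonneg hr0 t) (pow_nonneg hr0 t)
      (fun i a => by rw [Matrix.transpose_apply]; exact hpow t ht a i)
      (fun a j => hpow t ht a j) i j
  -- the trace sequence
  set TrT : ℕ → ℝ := fun t => (L ^ t * (L ^ t)ᵀ).trace with hTrT
  have hTrT_eq : ∀ t, TrT t = ∑ j, ∑ i, ((L ^ t) j i) ^ 2 := by
    intro t
    have h := LQRAux.trace_tmul_eq ((L ^ t)ᵀ)
    rw [Matrix.transpose_transpose] at h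
    rw [hTrT]
    simp only [h, Matrix.transpose_apply]
  have hTrT0 : ∀ t, 0 ≤ TrT t := by
    intro t
    rw [hTrT_eq t]
    exact Finset.sum_nonneg fun j _ => Finset.sum_nonneg fun i _ => sq_nonneg _
  have hTrT_le : ∀ t, N ≤ t → TrT t ≤ (d * d : ℝ) * (r ^ t * r ^ t) := by
    intro t ht
    rw [hTrT_eq t]
    have hb : ∀ j i : Fin d, ((L ^ t) j i) ^ 2 ≤ r ^ t * r ^ t := by
      intro j i
      have := hpow t ht j i
      calc ((L ^ t) j i) ^ 2 = |(L ^ t) j i| * |(L ^ t) j i| := by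
            rw [pow_two, abs_mul_abs_self]
        _ ≤ r ^ t * r ^ t := mul_le_mul this this (abs_nonneg _) (pow_nonneg hr0 t)
    calc ∑ j, ∑ i, ((L ^ t) j i) ^ 2 ≤ ∑ _j : Fin d, ∑ _i : Fin d, r ^ t * r ^ t :=
          Finset.sum_le_sum fun j _ => Finset.sum_le_sum fun i _ => hb j i
      _ = (d * d : ℝ) * (r ^ t * r ^ t) := by
          simp [Finset.sum_const, Finset.card_univ]
          ring
  have hsumTrT : Summable TrT :=
    LQRAux.summable_real_of_tail_bound TrT (fun t => (d * d : ℝ) * (r ^ t * r ^ t)) hTrT0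
      (hgeo2.mul_left _) N hTrT_le
  -- PSD of W and the Pmat terms
  have hKRK : (Kᵀ * R * K).PosSemidef := by
    have h := hR.posSemidef.conjTranspose_mul_mul_same K
    rwa [LQRAux.ctr K] at h
  have hWpsd : W.PosSemidef := hQ.posSemidef.add hKRK
  have hfP_psd : ∀ t : ℕ, ((Lᵀ) ^ t * W * L ^ t).PosSemidef := by
    intro t
    rw [hTpow t]
    have h := hWpsd.conjTranspose_mul_mul_same (L ^ t)
    rwa [LQRAux.ctr (L ^ t)] at h
  -- constants
  set mu : ℝ := sigmaMin Sig0 with hmudef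
  set q0 : ℝ := sigmaMin Q with hq0def
  have hq0pos : 0 < q0 := LQRAux.sigMin_pos_of_posDef hQ
  have hmuq : 0 < mu * q0 := mul_pos hmu hq0pos
  -- per-term trace lower bound
  have hTrP : ∀ t : ℕ, mu * q0 * TrT t ≤ (Sig0 * ((Lᵀ) ^ t * W * L ^ t)).trace := by
    intro t
    set M : Matrix (Fin d) (Fin d) ℝ := (L ^ t)ᵀ * L ^ t with hM
    have hMpsd : M.PosSemidef := LQRAux.psd_tmul (L ^ t)
    -- Step A : fP t - q0 • M is PSD
    have hWq : (W - q0 • (1 : Matrix (Fin d) (Fin d) ℝ)).PosSemidef := by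
      have h1 : (Q - q0 • (1 : Matrix (Fin d) (Fin d) ℝ)).PosSemidef :=
        LQRAux.psd_sub_sigMin_smul hQ.posSemidef
      have h2 : W - q0 • (1 : Matrix (Fin d) (Fin d) ℝ)
          = (Q - q0 • 1) + Kᵀ * R * K := by
        rw [hW]; abel
      rw [h2]
      exact h1.add hKRK
    have hA : ((Lᵀ) ^ t * W * L ^ t - q0 • M).PosSemidef := by
      have heq : (Lᵀ) ^ t * W * L ^ t - q0 • M
          = (L ^ t)ᵀ * (W - q0 • (1 : Matrix (Fin d) (Fin d) ℝ)) * L ^ t := by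
        rw [hTpow t, Matrix.mul_sub, Matrix.sub_mul, hM]
        congr 1
        rw [Matrix.mul_smul, mul_one, Matrix.smul_mul]
      rw [heq]
      have h := hWq.conjTranspose_mul_mul_same (L ^ t)
      rwa [LQRAux.ctr (L ^ t)] at h
    -- Step B
    have hB : (Sig0 * (q0 • M)).trace ≤ (Sig0 * ((Lᵀ) ^ t * W * L ^ t)).trace :=
      LQRAux.trace_mul_mono_psd hSig0 hA
    have hBeq : (Sig0 * (q0 • M)).trace = q0 * (Sig0 * M).trace := by
      rw [Matrix.mul_smul, Matrix.trace_smul, smul_eq_mul]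
    -- Step C
    have hC : mu * M.trace ≤ (Sig0 * M).trace := by
      have h := LQRAux.trace_mul_psd_nonneg (LQRAux.psd_sub_sigMin_smul hSig0) hMpsd
      rw [Matrix.sub_mul, Matrix.trace_sub, sub_nonneg, Matrix.smul_mul, one_mul,
        Matrix.trace_smul, smul_eq_mul] at h
      exact h
    -- Step D
    have hD : M.trace = TrT t := by
      rw [hM, hTrT, Matrix.trace_mul_comm]
    calc mu * q0 * TrT t = q0 * (mu * M.trace) := by rw [hD]; ring
      _ ≤ q0 * (Sig0 * M).trace := mul_le_mul_of_nonneg_left hC (le_of_lt hq0pos)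
      _ = (Sig0 * (q0 • M)).trace := hBeq.symm
      _ ≤ (Sig0 * ((Lᵀ) ^ t * W * L ^ t)).trace := hB
  -- Cost identity and bound
  have hPdef : Pmat A B Q R K = ∑' t, (Lᵀ) ^ t * W * L ^ t := rfl
  have hsumSP : Summable (fun t => Sig0 * ((Lᵀ) ^ t * W * L ^ t)) :=
    LQRAux.summable_mulleft Sig0 _ hsumP
  have hCost_eq : Cost A B Q R Sig0 K = ∑' t, (Sig0 * ((Lᵀ) ^ t * W * L ^ t)).trace := by
    show (Sig0 * Pmat A B Q R K).trace = _
    rw [hPdef, LQRAux.mulleft_tsum Sig0 _ hsumP, LQRAux.trace_tsum _ hsumSP]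
  have hCost_ge : mu * q0 * (∑' t, TrT t) ≤ Cost A B Q R Sig0 K := by
    rw [hCost_eq, ← tsum_mul_left]
    exact Summable.tsum_le_tsum hTrP (hsumTrT.mul_left _) (LQRAux.summable_trace _ hsumSP)
  have hS0 : 0 ≤ ∑' t, TrT t := tsum_nonneg hTrT0
  have hSle : (∑' t, TrT t) ≤ Cost A B Q R Sig0 K / (mu * q0) :=
    (le_div_iff₀ hmuq).mpr (by rw [mul_comm]; exact hCost_ge)
  have hCost0 : 0 ≤ Cost A B Q R Sig0 K := le_trans (by positivity) hCost_ge
  have hc0 : 0 ≤ Cost A B Q R Sig0 K / (mu * q0) := div_nonneg hCost0 (le_of_lt hmuq)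
  -- part 1
  have part1 : ∀ X : Matrix (Fin d) (Fin d) ℝ,
      specNorm (TK A B K X) ≤ Cost A B Q R Sig0 K / (mu * q0) * specNorm X := by
    intro X
    have hspX : (0 : ℝ) ≤ LQRAux.specNorm' X := LQRAux.specNorm'_nonneg X
    have hspt : ∀ t : ℕ, LQRAux.specNorm' (L ^ t * X * (Lᵀ) ^ t)
        ≤ TrT t * LQRAux.specNorm' X := by
      intro t
      set s : ℝ := LQRAux.specNorm' (L ^ t) with hs
      have hs0 : 0 ≤ s := LQRAux.specNorm'_nonneg _
      have h1 : LQRAux.specNorm' (L ^ t * X * (Lᵀ) ^ t)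
          ≤ s * LQRAux.specNorm' X * s := by
        rw [hTpow t]
        calc LQRAux.specNorm' (L ^ t * X * (L ^ t)ᵀ)
            ≤ LQRAux.specNorm' (L ^ t * X) * LQRAux.specNorm' ((L ^ t)ᵀ) :=
              LQRAux.spec_mul _ _
          _ = LQRAux.specNorm' (L ^ t * X) * s := by rw [LQRAux.spec_transpose]
          _ ≤ (s * LQRAux.specNorm' X) * s :=
              mul_le_mul_of_nonneg_right (LQRAux.spec_mul _ _) hs0
      have h2 : s ^ 2 ≤ TrT t := by
        have h3 := LQRAux.spec_sq_le_trace_tmul (L ^ t)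
        rw [Matrix.trace_mul_comm] at h3
        exact h3
      calc LQRAux.specNorm' (L ^ t * X * (Lᵀ) ^ t) ≤ s * LQRAux.specNorm' X * s := h1
        _ = s ^ 2 * LQRAux.specNorm' X := by ring
        _ ≤ TrT t * LQRAux.specNorm' X := mul_le_mul_of_nonneg_right h2 hspX
    have hTK : TK A B K X = ∑' t, L ^ t * X * (Lᵀ) ^ t := rfl
    have hmain : LQRAux.specNorm' (TK A B K X)
        ≤ ∑' t, TrT t * LQRAux.specNorm' X := by
      rw [hTK]
      exact LQRAux.spec_tsum_le (hsumX X) (hsumTrT.mul_right _) hspt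
    have hsum_eq : (∑' t, TrT t * LQRAux.specNorm' X)
        = (∑' t, TrT t) * LQRAux.specNorm' X := tsum_mul_right
    show LQRAux.specNorm' (TK A B K X) ≤ _
    calc LQRAux.specNorm' (TK A B K X) ≤ (∑' t, TrT t) * LQRAux.specNorm' X := by
          rw [← hsum_eq]; exact hmain
      _ ≤ Cost A B Q R Sig0 K / (mu * q0) * LQRAux.specNorm' X :=
          mul_le_mul_of_nonneg_right hSle hspX
  refine ⟨fun X _ => part1 X, ?_⟩
  -- part 2
  refine Real.sSup_le ?_ hc0
  rintro v ⟨X, hXsym, hXne, rfl⟩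
  have hXpos : 0 < specNorm X := LQRAux.spec_pos_of_ne_zero hXne
  rw [div_le_iff₀ hXpos]
  exact part1 X
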